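/- Let G be a non-constant multi-GGS group and let g ∈ G be directed along the ray 0̄ (i.e. g stabilises every vertex 0^n and all labels of g away from the vertices adjacent to the ray are trivial). Then g ∈ B. -/

import Mathlib

/-!  Automorphisms of the `p`-regular rooted tree `X*`, `X = {0, …, p-1} = ℤ/pℤ`, encoded by
their portraits: an automorphism is the collection of its labels `g|^v ∈ Sym(X)`, `v ∈ X*`. -/

/-- The automorphism group of the `p`-regular rooted tree, encoded via portraits. -/
def TreeAut (p : ℕ) := List (ZMod p) → Equiv.Perm (ZMod p)

instance {p : ℕ} : CoeFun (TreeAut p) (fun _ => List (ZMod p) → Equiv.Perm (ZMod p)) :=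
  ⟨fun g => g⟩

/-- The action of a portrait on the words of the tree. -/
def pact {p : ℕ} : TreeAut p → List (ZMod p) → List (ZMod p)
  | _, [] => []
  | L, x :: v => L [] x :: pact (fun w => L (x :: w)) v

/-- The inverse action of a portrait on the words of the tree. -/
def pactInv {p : ℕ} : TreeAut p → List (ZMod p) → List (ZMod p)
  | _, [] => []
  | L, y :: v => (L [])⁻¹ y :: pactInv (fun w => L ((L [])⁻¹ y :: w)) v

theorem pactInv_pact {p : ℕ} (L : TreeAut p) (v : List (ZMod p)) :
    pactInv L (pact L v) = v := by
  induction v generalizing L with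
  | nil => rfl
  | cons x v ih => simp [pact, pactInv]; exact ih _

theorem pact_pactInv {p : ℕ} (L : TreeAut p) (v : List (ZMod p)) :
    pact L (pactInv L v) = v := by
  induction v generalizing L with
  | nil => rfl
  | cons x v ih => simp [pact, pactInv]; exact ih _

theorem pact_one {p : ℕ} (v : List (ZMod p)) :
    pact (fun _ => 1 : TreeAut p) v = v := by
  induction v with
  | nil => rfl
  | cons x v ih => simpa [pact] using ih

theorem pact_mulP {p : ℕ} (L M : TreeAut p) (v : List (ZMod p)) :
    pact (fun u => L (pact M u) * M u) v = pact L (pact M v) := by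
  induction v generalizing L M with
  | nil => rfl
  | cons x v ih =>
    simp only [pact, Equiv.Perm.mul_apply]
    exact congrArg _ (ih (fun u => L ((M []) x :: u)) (fun w => M (x :: w)))

instance {p : ℕ} : One (TreeAut p) := ⟨fun _ => 1⟩
instance {p : ℕ} : Mul (TreeAut p) := ⟨fun L M => fun v => L (pact M v) * M v⟩
instance {p : ℕ} : Inv (TreeAut p) := ⟨fun L => fun v => (L (pactInv L v))⁻¹⟩

theorem TreeAut.mul_def {p : ℕ} (L M : TreeAut p) (v : List (ZMod p)) :
    (L * M) v = L (pact M v) * M v := rfl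
theorem TreeAut.one_def {p : ℕ} (v : List (ZMod p)) : (1 : TreeAut p) v = 1 := rfl
theorem TreeAut.inv_def {p : ℕ} (L : TreeAut p) (v : List (ZMod p)) :
    L⁻¹ v = (L (pactInv L v))⁻¹ := rfl

instance {p : ℕ} : Group (TreeAut p) where
  mul_assoc a b c := by
    funext v
    show (a * b) (pact c v) * c v = a (pact (b * c) v) * ((b * c) v)
    show a (pact b (pact c v)) * b (pact c v) * c v
        = a (pact (fun u => b (pact c u) * c u) v) * (b (pact c v) * c v)
    rw [pact_mulP, mul_assoc]
  one_mul a := by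
    funext v
    show (1 : TreeAut p) (pact a v) * a v = a v
    simp [TreeAut.one_def]
  mul_one a := by
    funext v
    show a (pact (fun _ => 1) v) * (1 : Equiv.Perm (ZMod p)) = a v
    rw [pact_one, mul_one]
  inv_mul_cancel a := by
    funext v
    show (a (pactInv a (pact a v)))⁻¹ * a v = (1 : TreeAut p) v
    rw [pactInv_pact, TreeAut.one_def, inv_mul_cancel]

/-- The rooted automorphism with label `σ` at the root and trivial labels elsewhere. -/
def rootedAut {p : ℕ} (σ : Equiv.Perm (ZMod p)) : TreeAut p :=
  fun v => if v = [] then σ else 1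

/-- The rooted automorphism `a` given by the `p`-cycle `σ = (0 1 … p-1)`, `x ↦ x + 1`. -/
def aAut (p : ℕ) : TreeAut p := rootedAut (Equiv.addRight (1 : ZMod p))

/-- The section `g|_x` of `g` at the first-layer vertex `x`. -/
def sect {p : ℕ} (g : TreeAut p) (x : ZMod p) : TreeAut p := fun v => g (x :: v)

/-- The `n`-th diagonal `κ_n(g) = ψ_n⁻¹(g, …, g)`. -/
def kappa {p : ℕ} (n : ℕ) (g : TreeAut p) : TreeAut p :=
  fun v => if n ≤ v.length then g (v.drop n) else 1

/-- `ψ_n⁻¹(g, 1, …, 1)`: the automorphism acting as `g` below the vertex `0^n` and trivially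
elsewhere. -/
def embAt {p : ℕ} (n : ℕ) (g : TreeAut p) : TreeAut p :=
  fun v => if List.replicate n (0 : ZMod p) <+: v then g (v.drop n) else 1

/-- The scalar product of two vectors in `𝔽_p^r`. -/
def dotp {p r : ℕ} (n m : Fin r → ZMod p) : ZMod p := ∑ j, n j * m j

/-- The directed generator `b^n` of the multi-GGS group with defining data
`e : ℤ/pℤ → 𝔽_p^r` (the columns of the matrix `E`, with `e 0 = 0`): it satisfies
`ψ_1(b^n) = (b^n, a^{n·e_1}, …, a^{n·e_{p-1}})`. -/
def bAut {p r : ℕ} (e : ZMod p → Fin r → ZMod p) (n : Fin r → ZMod p) : TreeAut p :=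
  fun v =>
    match v.getLast? with
    | none => 1
    | some i =>
      if ∀ x ∈ v.dropLast, x = 0 then Equiv.addRight (dotp n (e i)) else 1

/-- The multi-GGS group `G_E = ⟨A ∪ B⟩` associated to the data `e`. -/
def GGS {p r : ℕ} (e : ZMod p → Fin r → ZMod p) : Subgroup (TreeAut p) :=
  Subgroup.closure ({aAut p} ∪ Set.range (bAut e))

open scoped commutatorElement in
/-- The element `c̲ = ψ_1⁻¹([b^{s_1}, a], 1, …, 1)`. -/
def cAut {p r : ℕ} (e : ZMod p → Fin r → ZMod p) : TreeAut p :=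
  embAt 1 ⁅bAut e (fun j => if (j : ℕ) = 0 then 1 else 0), aAut p⁆

/-- The regularisation `G_reg = ⟨G ∪ {c̲}⟩` of a multi-GGS group. -/
def GGSreg {p r : ℕ} (e : ZMod p → Fin r → ZMod p) : Subgroup (TreeAut p) :=
  Subgroup.closure ({aAut p, cAut e} ∪ Set.range (bAut e))

/-- The word length on `Aut(X*)` with respect to the generating set `A ∪ B` of the multi-GGS
group determined by `e`. -/
noncomputable def ggsLength {p r : ℕ} (e : ZMod p → Fin r → ZMod p) (g : TreeAut p) : ℕ :=
  sInf {m | ∃ l : List (TreeAut p),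
    (∀ x ∈ l, x ∈ Subgroup.zpowers (aAut p) ∨ x ∈ Set.range (bAut e)) ∧
    l.length = m ∧ l.prod = g}

/-- `e` defines a *non-constant* multi-GGS group: the defining space `E` is not the line of
constant vectors. -/
def NonConstant {p r : ℕ} (e : ZMod p → Fin r → ZMod p) : Prop :=
  (∃ i j : ZMod p, i ≠ 0 ∧ j ≠ 0 ∧ e i ≠ e j) ∧
    LinearIndependent (ZMod p) (fun j : Fin r => fun i : ZMod p => e i j)

/-- `e` defines a *symmetric* GGS group: `r = 1`, the defining space is contained in the
symmetric subspace `{λ : λ_i = λ_{p-i}}`, and the group is non-constant. -/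
def IsSymmetricGGS {p r : ℕ} (e : ZMod p → Fin r → ZMod p) : Prop :=
  r = 1 ∧ (∀ (i : ZMod p) (j : Fin r), e i j = e (-i) j) ∧ NonConstant e

/-- `e` defines a *regular* multi-GGS group: non-constant and not symmetric. -/
def IsRegularGGS {p r : ℕ} (e : ZMod p → Fin r → ZMod p) : Prop :=
  NonConstant e ∧ ¬ IsSymmetricGGS e

/-!
Write `g` as a word in the letters `a^t` and `b^n`.  The section of such a word at a
first-level vertex `x` is again a word (`secWord`), with one letter for each `b`-letter of the
original one, and summing the `b`-exponents of the sections over all `x` recovers the total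
`b`-exponent.  A word representing `1` therefore has total `b`-exponent `0`: each of its sections
represents `1` and either has fewer `b`-letters or consists of `b`-letters only, and `n ↦ b^n` is
injective because the columns of `E` are linearly independent.

If `g` is directed along `0̄`, its sections at `x ≠ 0` are powers of `a`, so their `b`-exponents
vanish and the section at `0` carries the whole `b`-exponent `m` of `g`.  The labels of `g` at the
first-level vertices are determined by these exponents, hence agree with those of `b^m`, and
induction along the ray gives `g = b^m`.
-/

section dotp

variable {p r : ℕ}

theorem dotp_add_left (n m v : Fin r → ZMod p) : dotp (n + m) v = dotp n v + dotp m v :=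
  add_dotProduct n m v

theorem dotp_zero_left (v : Fin r → ZMod p) : dotp 0 v = 0 :=
  zero_dotProduct v

theorem dotp_zero_right (n : Fin r → ZMod p) : dotp n 0 = 0 :=
  dotProduct_zero n

end dotp

namespace TreeAut

variable {p r : ℕ}

theorem mul_nil_apply (L M : TreeAut p) : (L * M) [] = L [] * M [] := rfl

theorem sect_mul (L M : TreeAut p) (x : ZMod p) :
    sect (L * M) x = sect L (M [] x) * sect M x := rfl

def aPow (t : ZMod p) : TreeAut p := rootedAut (Equiv.addRight t)

theorem aPow_nil_apply (t : ZMod p) : aPow t [] = Equiv.addRight t := rfl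

theorem aPow_cons_apply (t x : ZMod p) (v : List (ZMod p)) : aPow t (x :: v) = 1 := rfl

theorem aPow_add (s t : ZMod p) : aPow (s + t) = aPow s * aPow t := by
  funext v
  cases v with
  | nil => rw [mul_nil_apply, aPow_nil_apply, aPow_nil_apply, aPow_nil_apply, add_comm,
      Equiv.addRight_add]
  | cons x w => rfl

theorem aPow_zero : (aPow 0 : TreeAut p) = 1 := by
  funext v
  cases v with
  | nil => exact Equiv.addRight_zero
  | cons x w => rfl

theorem aPow_neg (t : ZMod p) : aPow (-t) = (aPow t)⁻¹ :=
  eq_inv_of_mul_eq_one_left (by rw [← aPow_add, neg_add_cancel, aPow_zero])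

section bAut

variable {e : ZMod p → Fin r → ZMod p}

theorem bAut_nil_apply (n : Fin r → ZMod p) : bAut e n [] = 1 := rfl

theorem bAut_singleton_apply (n : Fin r → ZMod p) (x : ZMod p) :
    bAut e n [x] = Equiv.addRight (dotp n (e x)) := by
  simp [bAut]

theorem sect_bAut_zero (he0 : e 0 = 0) (n : Fin r → ZMod p) : sect (bAut e n) 0 = bAut e n := by
  funext w
  cases w with
  | nil => simp [sect, bAut, he0, dotp]
  | cons y v => simp [sect, bAut]

theorem sect_bAut_of_ne (n : Fin r → ZMod p) {x : ZMod p} (hx : x ≠ 0) :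
    sect (bAut e n) x = aPow (dotp n (e x)) := by
  funext w
  cases w with
  | nil => exact bAut_singleton_apply n x
  | cons y v => simp only [sect, bAut, aPow_cons_apply]; split <;> simp [hx]

theorem bAut_zero : bAut e (0 : Fin r → ZMod p) = 1 := by
  funext v
  simp only [bAut, dotp_zero_left, Equiv.addRight_zero, ite_self]
  split <;> rfl

theorem bAut_zero_cons (he0 : e 0 = 0) (n : Fin r → ZMod p) (w : List (ZMod p)) :
    bAut e n (0 :: w) = bAut e n w :=
  congrFun (sect_bAut_zero he0 n) w

theorem bAut_add (he0 : e 0 = 0) (n m : Fin r → ZMod p) :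
    bAut e (n + m) = bAut e n * bAut e m := by
  funext v
  induction v with
  | nil => rfl
  | cons x v ih =>
    change bAut e (n + m) (x :: v) = (sect (bAut e n) x * sect (bAut e m) x) v
    by_cases hx : x = 0
    · subst hx
      rw [sect_bAut_zero he0, sect_bAut_zero he0, bAut_zero_cons he0]
      exact ih
    · change sect (bAut e (n + m)) x v = _
      rw [sect_bAut_of_ne n hx, sect_bAut_of_ne m hx, sect_bAut_of_ne _ hx, dotp_add_left,
        aPow_add]

theorem bAut_neg (he0 : e 0 = 0) (n : Fin r → ZMod p) : bAut e (-n) = (bAut e n)⁻¹ :=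
  eq_inv_of_mul_eq_one_left (by rw [← bAut_add he0, neg_add_cancel, bAut_zero])

theorem eq_zero_of_bAut_eq_one
    (hli : LinearIndependent (ZMod p) (fun j : Fin r => fun i : ZMod p => e i j))
    {n : Fin r → ZMod p} (h : bAut e n = 1) : n = 0 := by
  have hdotp : ∀ i, dotp n (e i) = 0 := fun i => by
    have := congrFun h [i]
    rw [bAut_singleton_apply, TreeAut.one_def] at this
    simpa using congrArg (· 0) this
  funext j
  refine Fintype.linearIndependent_iff.mp hli n (funext fun i => ?_) j
  simpa [dotp] using hdotp i

end bAut

/-- `Sum.inl t` stands for `a^t` and `Sum.inr n` for `b^n`. -/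
abbrev GGSLetter (p r : ℕ) := ZMod p ⊕ (Fin r → ZMod p)

section Words

variable (e : ZMod p → Fin r → ZMod p)

def letter : GGSLetter p r → TreeAut p := Sum.elim aPow (bAut e)

def evalWord (w : List (GGSLetter p r)) : TreeAut p := (w.map (letter e)).prod

def aExp (w : List (GGSLetter p r)) : ZMod p := (w.map (Sum.elim id fun _ => 0)).sum

def bExp (w : List (GGSLetter p r)) : Fin r → ZMod p := (w.map (Sum.elim (fun _ => 0) id)).sum

def bSectLetter (y : ZMod p) (n : Fin r → ZMod p) : GGSLetter p r :=
  if y = 0 then Sum.inr n else Sum.inl (dotp n (e y))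

/-- The letter `b^n` contributes its section at `x + aExp w`, the image of `x` under the
suffix `w` that acts before it. -/
def secWord (x : ZMod p) : List (GGSLetter p r) → List (GGSLetter p r)
  | [] => []
  | Sum.inl _ :: w => secWord x w
  | Sum.inr n :: w => bSectLetter e (x + aExp w) n :: secWord x w

variable {e}

@[simp] theorem aExp_nil : aExp ([] : List (GGSLetter p r)) = 0 := rfl

@[simp] theorem aExp_inl_cons (t : ZMod p) (w : List (GGSLetter p r)) :
    aExp (Sum.inl t :: w) = t + aExp w := List.sum_cons

@[simp] theorem aExp_inr_cons (n : Fin r → ZMod p) (w : List (GGSLetter p r)) :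
    aExp (Sum.inr n :: w) = aExp w := (List.sum_cons).trans (zero_add _)

@[simp] theorem bExp_nil : bExp ([] : List (GGSLetter p r)) = 0 := rfl

@[simp] theorem bExp_inl_cons (t : ZMod p) (w : List (GGSLetter p r)) :
    bExp (Sum.inl t :: w) = bExp w := (List.sum_cons).trans (zero_add _)

@[simp] theorem bExp_inr_cons (n : Fin r → ZMod p) (w : List (GGSLetter p r)) :
    bExp (Sum.inr n :: w) = n + bExp w := List.sum_cons

theorem bExp_append (w w' : List (GGSLetter p r)) : bExp (w ++ w') = bExp w + bExp w' := by
  simp [bExp]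

theorem letter_bSectLetter (he0 : e 0 = 0) (y : ZMod p) (n : Fin r → ZMod p) :
    letter e (bSectLetter e y n) = sect (bAut e n) y := by
  unfold bSectLetter
  split_ifs with hy
  · rw [hy, sect_bAut_zero he0]; rfl
  · rw [sect_bAut_of_ne n hy]; rfl

theorem aExp_bSectLetter_cons (he0 : e 0 = 0) (y : ZMod p) (n : Fin r → ZMod p)
    (w : List (GGSLetter p r)) : aExp (bSectLetter e y n :: w) = dotp n (e y) + aExp w := by
  unfold bSectLetter
  split_ifs with hy
  · rw [aExp_inr_cons, hy, he0, dotp_zero_right, zero_add]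
  · rw [aExp_inl_cons]

theorem bExp_bSectLetter_cons (y : ZMod p) (n : Fin r → ZMod p) (w : List (GGSLetter p r)) :
    bExp (bSectLetter e y n :: w) = (if y = 0 then n else 0) + bExp w := by
  unfold bSectLetter
  split_ifs <;> simp

theorem evalWord_cons (s : GGSLetter p r) (w : List (GGSLetter p r)) :
    evalWord e (s :: w) = letter e s * evalWord e w := List.prod_cons

theorem evalWord_append (w w' : List (GGSLetter p r)) :
    evalWord e (w ++ w') = evalWord e w * evalWord e w' := by
  simp [evalWord]

theorem evalWord_nil_apply (w : List (GGSLetter p r)) :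
    evalWord e w [] = Equiv.addRight (aExp w) := by
  induction w with
  | nil => exact Equiv.addRight_zero.symm
  | cons s w ih =>
    rw [evalWord_cons, mul_nil_apply, ih]
    cases s with
    | inl t => rw [aExp_inl_cons, add_comm, Equiv.addRight_add]; rfl
    | inr n => simp [letter, bAut_nil_apply]

theorem sect_evalWord (he0 : e 0 = 0) (x : ZMod p) (w : List (GGSLetter p r)) :
    sect (evalWord e w) x = evalWord e (secWord e x w) := by
  induction w with
  | nil => rfl
  | cons s w ih =>
    rw [evalWord_cons, sect_mul, evalWord_nil_apply, ih]
    simp only [Equiv.coe_addRight]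
    cases s with
    | inl t => exact one_mul _
    | inr n =>
      rw [secWord, evalWord_cons, letter_bSectLetter he0]
      rfl

theorem length_secWord (x : ZMod p) (w : List (GGSLetter p r)) :
    (secWord e x w).length = w.countP Sum.isRight := by
  induction w with
  | nil => rfl
  | cons s w ih => cases s <;> simp [secWord, ih, List.countP_cons]

theorem evalWord_eq_bAut_of_forall_isRight (he0 : e 0 = 0) {w : List (GGSLetter p r)}
    (hw : ∀ s ∈ w, s.isRight) : evalWord e w = bAut e (bExp w) := by
  induction w with
  | nil => exact bAut_zero.symm
  | cons s w ih =>
    obtain ⟨n, rfl⟩ := Sum.isRight_iff.mp (hw s List.mem_cons_self)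
    rw [evalWord_cons, ih fun s hs => hw s (List.mem_cons_of_mem _ hs), bExp_inr_cons,
      bAut_add he0]
    rfl

theorem sum_bExp_secWord [NeZero p] (w : List (GGSLetter p r)) :
    ∑ x, bExp (secWord e x w) = bExp w := by
  induction w with
  | nil => simp [secWord]
  | cons s w ih =>
    cases s with
    | inl t => simpa [secWord] using ih
    | inr n =>
      simp only [secWord, bExp_bSectLetter_cons, Finset.sum_add_distrib, ih, bExp_inr_cons,
        add_eq_zero_iff_eq_neg]
      simp

theorem aExp_secWord [NeZero p] (he0 : e 0 = 0) (x : ZMod p) (w : List (GGSLetter p r)) :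
    aExp (secWord e x w) = ∑ d, dotp (bExp (secWord e d w)) (e (x - d)) := by
  induction w with
  | nil => simp [secWord, dotp_zero_left]
  | cons s w ih =>
    cases s with
    | inl t => simpa [secWord] using ih
    | inr n =>
      simp only [secWord, aExp_bSectLetter_cons he0, bExp_bSectLetter_cons, dotp_add_left,
        Finset.sum_add_distrib, ih, add_eq_zero_iff_eq_neg]
      rw [add_left_inj, Fintype.sum_eq_single (-aExp w) fun d hd => by
        rw [if_neg hd, dotp_zero_left], if_pos rfl, sub_neg_eq_add]

theorem evalWord_reverse_map_neg (he0 : e 0 = 0) (w : List (GGSLetter p r)) :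
    evalWord e (w.map (Sum.map Neg.neg Neg.neg)).reverse = (evalWord e w)⁻¹ := by
  have hneg : ∀ s, letter e (Sum.map Neg.neg Neg.neg s) = (letter e s)⁻¹ := by
    rintro (t | n)
    · exact aPow_neg t
    · exact bAut_neg he0 n
  simp only [evalWord, List.prod_inv_reverse, List.map_reverse, List.map_map,
    Function.comp_def, hneg]

theorem exists_evalWord_eq (he0 : e 0 = 0) {g : TreeAut p} (hg : g ∈ GGS e) :
    ∃ w, evalWord e w = g := by
  induction hg using Subgroup.closure_induction with
  | mem g hg =>
    rcases hg with rfl | ⟨n, rfl⟩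
    · exact ⟨[Sum.inl 1], mul_one _⟩
    · exact ⟨[Sum.inr n], mul_one _⟩
  | one => exact ⟨[], rfl⟩
  | mul g h _ _ ihg ihh =>
    obtain ⟨w, rfl⟩ := ihg
    obtain ⟨w', rfl⟩ := ihh
    exact ⟨w ++ w', evalWord_append w w'⟩
  | inv g _ ih =>
    obtain ⟨w, rfl⟩ := ih
    exact ⟨_, evalWord_reverse_map_neg he0 w⟩

theorem bExp_eq_zero_of_evalWord_eq_one [NeZero p] (he0 : e 0 = 0)
    (hli : LinearIndependent (ZMod p) (fun j : Fin r => fun i : ZMod p => e i j))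
    {w : List (GGSLetter p r)} (hw : evalWord e w = 1) : bExp w = 0 := by
  induction hn : w.countP Sum.isRight using Nat.strong_induction_on generalizing w with
  | _ n ih =>
  rw [← sum_bExp_secWord (e := e) w]
  refine Finset.sum_eq_zero fun x _ => ?_
  have hx : evalWord e (secWord e x w) = 1 := by rw [← sect_evalWord he0, hw]; rfl
  rcases (List.countP_le_length (p := Sum.isRight) (l := secWord e x w)).lt_or_eq with hlt | heq
  · rw [length_secWord, hn] at hlt
    exact ih _ hlt hx rfl
  · refine eq_zero_of_bAut_eq_one hli ?_
    rw [← evalWord_eq_bAut_of_forall_isRight he0 (List.countP_eq_length.mp heq), hx]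

end Words

def FixesZeroRay (g : TreeAut p) : Prop :=
  ∀ m : ℕ, pact g (List.replicate m (0 : ZMod p)) = List.replicate m 0

def IsZeroRayDirected (g : TreeAut p) : Prop :=
  ∀ v : List (ZMod p), (∀ (k : ℕ) (i : ZMod p), v ≠ List.replicate k (0 : ZMod p) ++ [i]) →
    (∀ k : ℕ, v ≠ List.replicate k (0 : ZMod p)) → g v = 1

theorem FixesZeroRay.nil_apply_zero {g : TreeAut p} (h : FixesZeroRay g) : g [] 0 = 0 := by
  simpa [pact] using h 1

theorem FixesZeroRay.sect_zero {g : TreeAut p} (h : FixesZeroRay g) : FixesZeroRay (sect g 0) :=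
  fun m => by
    have hm := h (m + 1)
    rw [List.replicate_succ, pact, h.nil_apply_zero] at hm
    exact (List.cons_eq_cons.mp hm).2

theorem IsZeroRayDirected.sect_zero {g : TreeAut p} (h : IsZeroRayDirected g) :
    IsZeroRayDirected (sect g 0) := fun v hadj hray =>
  h (0 :: v) (fun k i hk => by cases k <;> simp_all [List.replicate_succ])
    (fun k hk => by cases k <;> simp_all [List.replicate_succ])

theorem IsZeroRayDirected.apply_cons_cons {g : TreeAut p} (h : IsZeroRayDirected g)
    {x : ZMod p} (hx : x ≠ 0) (y : ZMod p) (w : List (ZMod p)) : g (x :: y :: w) = 1 :=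
  h _ (fun k i hk => by cases k <;> simp_all [List.replicate_succ])
    (fun k hk => by cases k <;> simp_all [List.replicate_succ])

section Directed

variable [NeZero p] {e : ZMod p → Fin r → ZMod p} {w : List (GGSLetter p r)}

theorem bExp_secWord_eq_zero (he0 : e 0 = 0)
    (hli : LinearIndependent (ZMod p) (fun j : Fin r => fun i : ZMod p => e i j))
    (hdir : IsZeroRayDirected (evalWord e w)) {x : ZMod p}
    (hx : x ≠ 0) : bExp (secWord e x w) = 0 := by
  set t := aExp (secWord e x w)
  have hsect : evalWord e (secWord e x w) = aPow t := by
    funext v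
    cases v with
    | nil => exact evalWord_nil_apply _
    | cons y v => rw [← sect_evalWord he0]; exact hdir.apply_cons_cons hx y v
  have hone : evalWord e (secWord e x w ++ [Sum.inl (-t)]) = 1 := by
    rw [evalWord_append, hsect, evalWord_cons]
    change aPow t * (aPow (-t) * 1) = 1
    rw [mul_one, ← aPow_add, add_neg_cancel, aPow_zero]
  simpa [bExp_append] using bExp_eq_zero_of_evalWord_eq_one he0 hli hone

theorem bExp_secWord_zero (he0 : e 0 = 0)
    (hli : LinearIndependent (ZMod p) (fun j : Fin r => fun i : ZMod p => e i j))
    (hdir : IsZeroRayDirected (evalWord e w)) :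
    bExp (secWord e 0 w) = bExp w := by
  rw [← sum_bExp_secWord w,
    Fintype.sum_eq_single 0 fun x hx => bExp_secWord_eq_zero he0 hli hdir hx]

theorem evalWord_eq_bAut (he0 : e 0 = 0)
    (hli : LinearIndependent (ZMod p) (fun j : Fin r => fun i : ZMod p => e i j))
    (hfix : FixesZeroRay (evalWord e w))
    (hdir : IsZeroRayDirected (evalWord e w)) : evalWord e w = bAut e (bExp w) := by
  funext v
  induction v generalizing w with
  | nil =>
    have h0 := hfix.nil_apply_zero
    rw [evalWord_nil_apply] at h0 ⊢
    simp only [Equiv.coe_addRight, zero_add] at h0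
    rw [h0, Equiv.addRight_zero]
    rfl
  | cons x v ih =>
    change sect (evalWord e w) x v = sect (bAut e (bExp w)) x v
    rw [sect_evalWord he0]
    by_cases hx : x = 0
    · subst hx
      rw [sect_bAut_zero he0, ← bExp_secWord_zero he0 hli hdir]
      exact ih (by rw [← sect_evalWord he0]; exact hfix.sect_zero)
        (by rw [← sect_evalWord he0]; exact hdir.sect_zero)
    · cases v with
      | nil =>
        rw [evalWord_nil_apply, sect_bAut_of_ne _ hx, aPow_nil_apply, aExp_secWord he0,
          Fintype.sum_eq_single 0 fun d hd => by
            rw [bExp_secWord_eq_zero he0 hli hdir hd, dotp_zero_left],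
          bExp_secWord_zero he0 hli hdir, sub_zero]
      | cons y v =>
        rw [← sect_evalWord he0, sect_bAut_of_ne _ hx]
        exact hdir.apply_cons_cons hx y v

end Directed

end TreeAut

theorem directed_mem_B_general (p r : ℕ) [Fact p.Prime]
    (e : ZMod p → Fin r → ZMod p) (he0 : e 0 = 0) (hnc : NonConstant e)
    (g : TreeAut p) (hg : g ∈ GGS e)
    (hfix : ∀ m : ℕ, pact g (List.replicate m (0 : ZMod p)) = List.replicate m 0)
    (hdir : ∀ v : List (ZMod p),
      (∀ (k : ℕ) (i : ZMod p), v ≠ List.replicate k (0 : ZMod p) ++ [i]) →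
      (∀ k : ℕ, v ≠ List.replicate k (0 : ZMod p)) → g v = 1) :
    ∃ n : Fin r → ZMod p, g = bAut e n := by
  obtain ⟨w, rfl⟩ := TreeAut.exists_evalWord_eq he0 hg
  exact ⟨_, TreeAut.evalWord_eq_bAut he0 hnc.2 hfix hdir⟩

/-- Let `G` be a non-constant multi-GGS group and let `g ∈ G` be directed along the ray `0̄`
(i.e. `g` stabilises every vertex `0^m`, and all labels of `g` away from the vertices adjacent
to the ray are trivial).  Then `g ∈ B`. -/
theorem directed_mem_B (p r : ℕ) [Fact p.Prime] (hp : Odd p)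
    (e : ZMod p → Fin r → ZMod p) (he0 : e 0 = 0) (hnc : NonConstant e)
    (g : TreeAut p) (hg : g ∈ GGS e)
    (hfix : ∀ m : ℕ, pact g (List.replicate m (0 : ZMod p)) = List.replicate m 0)
    (hdir : ∀ v : List (ZMod p),
      (∀ (k : ℕ) (i : ZMod p), v ≠ List.replicate k (0 : ZMod p) ++ [i]) →
      (∀ k : ℕ, v ≠ List.replicate k (0 : ZMod p)) → g v = 1) :
    ∃ n : Fin r → ZMod p, g = bAut e n :=
  directed_mem_B_general p r e he0 hnc g hg hfix hdir
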